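/- Let D be the double fan and G_D its group of homeomorphisms fixing all marked points, with the compact-open topology, acting on D by evaluation. Then for every compact Hausdorff space K with a continuous G_D-action and every continuous G_D-equivariant map i : D → K with dense image, one has i(e₀) = i(−e₀); in particular, i is not injective. -/

import Mathlib

noncomputable section

/-- The group of self-homeomorphisms of a topological space, under composition. -/
instance homeoGroup (X : Type*) [TopologicalSpace X] : Group (X ≃ₜ X) where
  mul a b := b.trans a
  one := Homeomorph.refl X
  inv := Homeomorph.symm
  mul_assoc a b c := Homeomorph.ext fun _ => rfl
  one_mul a := Homeomorph.ext fun _ => rfl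
  mul_one a := Homeomorph.ext fun _ => rfl
  inv_mul_cancel a := Homeomorph.ext fun x => a.symm_apply_apply x

/-- The real Hilbert space `ℓ²(ℕ)`. -/
abbrev DFanAmbient : Type := lp (fun _ : ℕ => ℝ) 2

/-- The `n`-th basic vector `eₙ` of `ℓ²(ℕ)`. -/
def dBasis (n : ℕ) : DFanAmbient := lp.single 2 n 1

/-- The double fan: the union over `n ≥ 1` of the straight-line segments `[e₀, eₙ]`
and `[-e₀, eₙ]` inside `ℓ²(ℕ)`, with the subspace topology. -/
def DoubleFan : Set DFanAmbient :=
  (⋃ n ∈ Set.Ici 1, segment ℝ (dBasis 0) (dBasis n)) ∪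
    ⋃ n ∈ Set.Ici 1, segment ℝ (-dBasis 0) (dBasis n)

/-- The marked points of the double fan: the points `(1 - 1/k)a + (1/k)eₙ` for
`a ∈ {e₀, -e₀}` and `k, n ≥ 1`. -/
def DMarked : Set ↥DoubleFan :=
  {x | ∃ (a : DFanAmbient) (k n : ℕ), (a = dBasis 0 ∨ a = -dBasis 0) ∧ 1 ≤ k ∧ 1 ≤ n ∧
    (x : DFanAmbient) = (1 - ((k : ℝ))⁻¹) • a + ((k : ℝ))⁻¹ • dBasis n}

/-- The group of all homeomorphisms of the double fan fixing every marked point. -/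
def DGroup : Subgroup (↥DoubleFan ≃ₜ ↥DoubleFan) where
  carrier := {g | ∀ x ∈ DMarked, g x = x}
  one_mem' := fun x _ => rfl
  mul_mem' := by
    intro a b ha hb x hx
    show a (b x) = x
    rw [hb x hx, ha x hx]
  inv_mem' := by
    intro a ha x hx
    show a.symm x = x
    conv_lhs => rw [← ha x hx]
    exact a.symm_apply_apply x

/-- The group `DGroup` carries the compact-open topology. -/
instance : TopologicalSpace DGroup :=
  TopologicalSpace.induced
    (fun g : DGroup => toContinuousMap (g : ↥DoubleFan ≃ₜ ↥DoubleFan))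
    ContinuousMap.compactOpen

/-- The base point `e₀` of the double fan. -/
def dPlus : ↥DoubleFan :=
  ⟨dBasis 0, Set.mem_union_left _
    (Set.mem_biUnion (Set.mem_Ici.2 le_rfl) (left_mem_segment ℝ (dBasis 0) (dBasis 1)))⟩

/-- The base point `-e₀` of the double fan. -/
def dMinus : ↥DoubleFan :=
  ⟨-dBasis 0, Set.mem_union_right _
    (Set.mem_biUnion (Set.mem_Ici.2 le_rfl) (left_mem_segment ℝ (-dBasis 0) (dBasis 1)))⟩


/-!
Fix a sign `ε` and let `p_j(t) = (1 - t) ε e₀ + t e_{j+1}`. For `1/(k+1) < t, s < 1/k` there is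
a homeomorphism in `G_D`, supported on the `(j+1)`-th arm between two consecutive marked points,
moving `p_j(t)` to `p_j(s)`. A compact subset of `ℓ²` has uniformly small far coordinates, so
these homeomorphisms tend to `1` as `j → ∞`; and on the compact space `K`, elements near `1` move
every point by a uniformly small amount. Hence `i(p_j(t))` and `i(p_j(s))` are asymptotically
close, and by continuity of `i` along each arm this extends to `s` in the closed interval
`[1/(k+1), 1/k]`. Chaining over `k`, `i(p_j(1/k))` is asymptotically close to `i(e_{j+1})` for
every `k`, while `p_j(1/k)` is within `2/k` of `ε e₀` uniformly in `j`. So `i(e_{j+1})` tends to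
`i(ε e₀)` for both signs.
-/

open Set Filter Topology Uniformity

section Slide

def tent (a b m u : ℝ) : ℝ := max 0 (min ((u - a) / (m - a)) ((b - u) / (b - m)))

/-- The piecewise-affine self-map of `ℝ` that fixes everything outside `(a, b)` and sends `m`
to `m'`. -/
def slide (a b m m' u : ℝ) : ℝ := u + (m' - m) * tent a b m u

variable {a b m m' u : ℝ}

theorem continuous_tent (a b m : ℝ) : Continuous (tent a b m) := by
  unfold tent; fun_prop

theorem tent_of_notMem_Ioo (hm : m ∈ Ioo a b) (hu : u ∉ Ioo a b) : tent a b m u = 0 := by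
  obtain ⟨ham, hmb⟩ := hm
  simp only [mem_Ioo, not_and_or, not_lt] at hu
  rcases hu with hu | hu
  · have : (u - a) / (m - a) ≤ 0 := div_nonpos_of_nonpos_of_nonneg (by linarith) (by linarith)
    exact max_eq_left ((min_le_left _ _).trans this)
  · have : (b - u) / (b - m) ≤ 0 := div_nonpos_of_nonpos_of_nonneg (by linarith) (by linarith)
    exact max_eq_left ((min_le_right _ _).trans this)

theorem tent_of_mem_Icc_left (hm : m ∈ Ioo a b) (hu : u ∈ Icc a m) :
    tent a b m u = (u - a) / (m - a) := by
  obtain ⟨ham, hmb⟩ := hm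
  have h1 : (u - a) / (m - a) ≤ 1 := (div_le_one (by linarith)).2 (by linarith [hu.2])
  have h2 : 1 ≤ (b - u) / (b - m) := (one_le_div (by linarith)).2 (by linarith [hu.2])
  rw [tent, min_eq_left (by linarith),
    max_eq_right (div_nonneg (by linarith [hu.1]) (by linarith))]

theorem tent_of_mem_Icc_right (hm : m ∈ Ioo a b) (hu : u ∈ Icc m b) :
    tent a b m u = (b - u) / (b - m) := by
  obtain ⟨ham, hmb⟩ := hm
  have h1 : (b - u) / (b - m) ≤ 1 := (div_le_one (by linarith)).2 (by linarith [hu.1])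
  have h2 : 1 ≤ (u - a) / (m - a) := (one_le_div (by linarith)).2 (by linarith [hu.1])
  rw [tent, min_eq_right (by linarith),
    max_eq_right (div_nonneg (by linarith [hu.2]) (by linarith))]

theorem slide_of_notMem_Ioo (hm : m ∈ Ioo a b) (hu : u ∉ Ioo a b) : slide a b m m' u = u := by
  rw [slide, tent_of_notMem_Ioo hm hu, mul_zero, add_zero]

theorem slide_self (hm : m ∈ Ioo a b) : slide a b m m' m = m' := by
  have : m - a ≠ 0 := by linarith [hm.1]
  rw [slide, tent_of_mem_Icc_left hm ⟨hm.1.le, le_rfl⟩, div_self this]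
  ring

theorem slide_sub_left (hm : m ∈ Ioo a b) (hu : u ∈ Icc a m) :
    slide a b m m' u - a = (u - a) * ((m' - a) / (m - a)) := by
  have : m - a ≠ 0 := by linarith [hm.1]
  rw [slide, tent_of_mem_Icc_left hm hu]
  field_simp
  ring

theorem slide_sub_right (hm : m ∈ Ioo a b) (hu : u ∈ Icc m b) :
    b - slide a b m m' u = (b - u) * ((b - m') / (b - m)) := by
  have : b - m ≠ 0 := by linarith [hm.2]
  rw [slide, tent_of_mem_Icc_right hm hu]
  field_simp
  ring

theorem slide_mem_Icc_left (hm : m ∈ Ioo a b) (hm' : m' ∈ Ioo a b) (hu : u ∈ Icc a m) :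
    slide a b m m' u ∈ Icc a m' := by
  have h := slide_sub_left (m' := m') hm hu
  have hq : 0 ≤ (m' - a) / (m - a) := div_nonneg (by linarith [hm'.1]) (by linarith [hm.1])
  have hq' : (m - a) * ((m' - a) / (m - a)) = m' - a := by
    field_simp [show m - a ≠ 0 by linarith [hm.1]]
  constructor
  · nlinarith [mul_nonneg (sub_nonneg.2 hu.1) hq]
  · nlinarith [mul_le_mul_of_nonneg_right (sub_le_sub_right hu.2 a) hq]

theorem slide_mem_Icc_right (hm : m ∈ Ioo a b) (hm' : m' ∈ Ioo a b) (hu : u ∈ Icc m b) :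
    slide a b m m' u ∈ Icc m' b := by
  have h := slide_sub_right (m' := m') hm hu
  have hq : 0 ≤ (b - m') / (b - m) := div_nonneg (by linarith [hm'.2]) (by linarith [hm.2])
  have hq' : (b - m) * ((b - m') / (b - m)) = b - m' := by
    field_simp [show b - m ≠ 0 by linarith [hm.2]]
  constructor
  · nlinarith [mul_le_mul_of_nonneg_right (sub_le_sub_left hu.1 b) hq]
  · nlinarith [mul_nonneg (sub_nonneg.2 hu.2) hq]

theorem slide_mem_Icc (hm : m ∈ Ioo a b) (hm' : m' ∈ Ioo a b) (hab : Icc a b ⊆ Icc 0 1)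
    (hu : u ∈ Icc (0 : ℝ) 1) : slide a b m m' u ∈ Icc (0 : ℝ) 1 := by
  by_cases hu' : u ∈ Ioo a b
  · rcases le_total u m with hum | hmu
    · exact hab (Icc_subset_Icc_right (hm'.2.le) (slide_mem_Icc_left hm hm' ⟨hu'.1.le, hum⟩))
    · exact hab (Icc_subset_Icc_left (hm'.1.le) (slide_mem_Icc_right hm hm' ⟨hmu, hu'.2.le⟩))
  · rwa [slide_of_notMem_Ioo hm hu']

theorem slide_slide (hm : m ∈ Ioo a b) (hm' : m' ∈ Ioo a b) (u : ℝ) :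
    slide a b m' m (slide a b m m' u) = u := by
  by_cases hu : u ∈ Ioo a b
  · rcases le_total u m with hum | hmu
    · have hu₁ : u ∈ Icc a m := ⟨hu.1.le, hum⟩
      have h := slide_sub_left (m' := m') hm hu₁
      have h' := slide_sub_left (m' := m) hm' (slide_mem_Icc_left hm hm' hu₁)
      have : m' - a ≠ 0 := by linarith [hm'.1]
      have : m - a ≠ 0 := by linarith [hm.1]
      rw [h] at h'
      field_simp at h'
      linarith
    · have hu₁ : u ∈ Icc m b := ⟨hmu, hu.2.le⟩
      have h := slide_sub_right (m' := m') hm hu₁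
      have h' := slide_sub_right (m' := m) hm' (slide_mem_Icc_right hm hm' hu₁)
      have : b - m' ≠ 0 := by linarith [hm'.2]
      have : b - m ≠ 0 := by linarith [hm.2]
      rw [h] at h'
      field_simp at h'
      linarith
  · rw [slide_of_notMem_Ioo hm hu, slide_of_notMem_Ioo hm' hu]

end Slide

theorem lp.eventually_cofinite_norm_apply_lt {α : Type*} {E : α → Type*}
    [∀ i, NormedAddCommGroup (E i)] {p : ENNReal} (hp : 0 < p.toReal) (x : lp E p) {δ : ℝ}
    (hδ : 0 < δ) : ∀ᶠ i in cofinite, ‖x i‖ < δ := by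
  filter_upwards [((lp.memℓp x).summable hp).tendsto_cofinite_zero.eventually_lt_const
    (Real.rpow_pos_of_pos hδ p.toReal)] with i hi
  exact (Real.rpow_lt_rpow_iff (norm_nonneg _) hδ.le hp).1 hi

theorem IsCompact.eventually_cofinite_forall_norm_apply_lt {α : Type*} {E : α → Type*}
    [∀ i, NormedAddCommGroup (E i)] {p : ENNReal} [Fact (1 ≤ p)] (hp : 0 < p.toReal)
    {C : Set (lp E p)} (hC : IsCompact C) {δ : ℝ} (hδ : 0 < δ) :
    ∀ᶠ i in cofinite, ∀ x ∈ C, ‖x i‖ < δ := by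
  obtain ⟨t, -, ht, hCt⟩ := hC.finite_cover_balls (half_pos hδ)
  filter_upwards [ht.eventually_all.2 fun y _ =>
    lp.eventually_cofinite_norm_apply_lt hp y (half_pos hδ)] with i hi x hx
  obtain ⟨y, hy, hxy⟩ := mem_iUnion₂.1 (hCt hx)
  have hxy' : ‖(x - y) i‖ < δ / 2 :=
    (lp.norm_apply_le_norm (ENNReal.toReal_pos_iff.1 hp).1.ne' _ i).trans_lt
      (mem_ball_iff_norm.1 hxy)
  calc ‖x i‖ = ‖y i + (x - y) i‖ := by rw [lp.coeFn_sub, Pi.sub_apply, add_sub_cancel]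
    _ ≤ ‖y i‖ + ‖(x - y) i‖ := norm_add_le _ _
    _ < δ := by linarith [hi y hy]

theorem tendsto_uniformity_smul_of_tendsto_one {G K ι : Type*} [Monoid G] [TopologicalSpace G]
    [UniformSpace K] [CompactSpace K] [MulAction G K] [ContinuousSMul G K] {l : Filter ι}
    {g : ι → G} (hg : Tendsto g l (𝓝 1)) (κ : ι → K) :
    Tendsto (fun j => (κ j, g j • κ j)) l (𝓤 K) := by
  let F : C(G, C(K, K)) := ContinuousMap.curry ⟨fun p : G × K => p.1 • p.2, continuous_smul⟩
  have hF := (F.continuous.tendsto 1).comp hg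
  rw [Function.comp_def, ContinuousMap.tendsto_iff_tendstoUniformly] at hF
  refine fun u hu => mem_map.2 ((hF u hu).mono fun j hj => ?_)
  simpa [F] using hj (κ j)

theorem DGroup.tendsto_nhds_one {ι : Type*} {l : Filter ι} {g : ι → DGroup}
    (h : ∀ C : Set DoubleFan, IsCompact C →
      ∀ᶠ j in l, EqOn (g j : DoubleFan ≃ₜ DoubleFan) id C) :
    Tendsto g l (𝓝 1) := by
  rw [nhds_induced, tendsto_comap_iff, ContinuousMap.tendsto_nhds_compactOpen]
  intro C hC U _ hCU
  filter_upwards [h C hC] with j hj x hx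
  exact (hj hx).symm ▸ hCU hx

namespace DoubleFan

theorem dBasis_apply_self (n : ℕ) : dBasis n n = 1 := lp.single_apply_self 2 n 1

theorem dBasis_apply_of_ne {n j : ℕ} (h : j ≠ n) : dBasis n j = 0 := lp.single_apply_ne 2 n 1 h

theorem norm_dBasis (n : ℕ) : ‖dBasis n‖ = 1 :=
  (lp.norm_single (E := fun _ : ℕ => ℝ) (p := 2) (by norm_num) n 1).trans norm_one

def fanPoint (ε : ℝ) (n : ℕ) (t : ℝ) : DFanAmbient := (1 - t) • (ε • dBasis 0) + t • dBasis n

theorem fanPoint_apply (ε : ℝ) (n : ℕ) (t : ℝ) (j : ℕ) :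
    fanPoint ε n t j = (1 - t) * (ε * dBasis 0 j) + t * dBasis n j := by
  simp only [fanPoint, lp.coeFn_add, lp.coeFn_smul, Pi.add_apply, Pi.smul_apply, smul_eq_mul]

theorem fanPoint_apply_zero {n : ℕ} (hn : 1 ≤ n) (ε t : ℝ) : fanPoint ε n t 0 = ε * (1 - t) := by
  rw [fanPoint_apply, dBasis_apply_self, dBasis_apply_of_ne (by omega)]
  ring

theorem fanPoint_apply_self {n : ℕ} (hn : 1 ≤ n) (ε t : ℝ) : fanPoint ε n t n = t := by
  rw [fanPoint_apply, dBasis_apply_self, dBasis_apply_of_ne (by omega)]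
  ring

theorem fanPoint_apply_of_ne {n j : ℕ} (h0 : j ≠ 0) (hn : j ≠ n) (ε t : ℝ) :
    fanPoint ε n t j = 0 := by
  rw [fanPoint_apply, dBasis_apply_of_ne h0, dBasis_apply_of_ne hn]
  ring

theorem fanPoint_zero (ε : ℝ) (n : ℕ) : fanPoint ε n 0 = ε • dBasis 0 := by
  simp [fanPoint]

theorem fanPoint_one (ε : ℝ) (n : ℕ) : fanPoint ε n 1 = dBasis n := by
  simp [fanPoint]

theorem norm_fanPoint_sub_le {ε : ℝ} (hε : ε = 1 ∨ ε = -1) (n : ℕ) {t : ℝ} (ht : 0 ≤ t) :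
    ‖fanPoint ε n t - ε • dBasis 0‖ ≤ 2 * t := by
  have h : fanPoint ε n t - ε • dBasis 0 = t • (dBasis n - ε • dBasis 0) := by
    unfold fanPoint; module
  have h2 : ‖dBasis n - ε • dBasis 0‖ ≤ 2 := by
    refine (norm_sub_le _ _).trans ?_
    rcases hε with rfl | rfl <;> norm_num [norm_smul, norm_dBasis]
  rw [h, norm_smul, Real.norm_of_nonneg ht]
  nlinarith

theorem mem_doubleFan_iff {x : DFanAmbient} :
    x ∈ DoubleFan ↔
      ∃ ε : ℝ, (ε = 1 ∨ ε = -1) ∧ ∃ n, 1 ≤ n ∧ ∃ t ∈ Icc (0 : ℝ) 1, fanPoint ε n t = x := by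
  simp only [DoubleFan, mem_union, mem_iUnion₂, mem_Ici, segment_eq_image, mem_image]
  constructor
  · rintro (⟨n, hn, t, ht, rfl⟩ | ⟨n, hn, t, ht, rfl⟩)
    · exact ⟨1, Or.inl rfl, n, hn, t, ht, by simp [fanPoint]⟩
    · exact ⟨-1, Or.inr rfl, n, hn, t, ht, by simp [fanPoint]⟩
  · rintro ⟨ε, rfl | rfl, n, hn, t, ht, rfl⟩
    · exact Or.inl ⟨n, hn, t, ht, by simp [fanPoint]⟩
    · exact Or.inr ⟨n, hn, t, ht, by simp [fanPoint]⟩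

theorem fanPoint_mem {ε : ℝ} (hε : ε = 1 ∨ ε = -1) {n : ℕ} (hn : 1 ≤ n) {t : ℝ}
    (ht : t ∈ Icc (0 : ℝ) 1) : fanPoint ε n t ∈ DoubleFan :=
  mem_doubleFan_iff.2 ⟨ε, hε, n, hn, t, ht, rfl⟩

variable {ε : ℝ} {n : ℕ} {a b m m' : ℝ}

theorem sign_cases {ε ε' : ℝ} (hε : ε = 1 ∨ ε = -1) (hε' : ε' = 1 ∨ ε' = -1) :
    ε' = ε ∨ ε' = -ε := by
  rcases hε with rfl | rfl <;> rcases hε' with rfl | rfl <;> norm_num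

theorem mul_self_of_sign (hε : ε = 1 ∨ ε = -1) : ε * ε = 1 := by
  rcases hε with rfl | rfl <;> norm_num

structure IsArmSlide (ε : ℝ) (n : ℕ) (a b m m' : ℝ) : Prop where
  sign : ε = 1 ∨ ε = -1
  one_le : 1 ≤ n
  nonneg : 0 ≤ a
  lt_one : b < 1
  mem : m ∈ Ioo a b
  mem' : m' ∈ Ioo a b

theorem IsArmSlide.symm (H : IsArmSlide ε n a b m m') : IsArmSlide ε n a b m' m :=
  ⟨H.sign, H.one_le, H.nonneg, H.lt_one, H.mem', H.mem⟩

/- On the arm `[ε e₀, eₙ]` the cut-off factor is `1` wherever `tent` does not vanish (there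
`ε x₀ = 1 - xₙ ≥ 1 - b`), and it is `0` on the opposite arm `[-ε e₀, eₙ]`. So the map moves
points along the first arm only. -/
def armSlideMap (ε : ℝ) (n : ℕ) (a b m m' : ℝ) (x : DFanAmbient) : DFanAmbient :=
  x + ((m' - m) * tent a b m (x n) * projIcc 0 1 zero_le_one (ε * x 0 / (1 - b))) •
    (dBasis n - ε • dBasis 0)

theorem continuous_armSlideMap (ε : ℝ) (n : ℕ) (a b m m' : ℝ) :
    Continuous (armSlideMap ε n a b m m') := by
  have hcoord : ∀ j, Continuous fun x : DFanAmbient => x j := fun j =>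
    (lp.evalCLM ℝ (fun _ : ℕ => ℝ) (p := 2) j).continuous
  unfold armSlideMap
  exact continuous_id.add (((continuous_const.mul ((continuous_tent a b m).comp (hcoord n))).mul
    (continuous_subtype_val.comp ((continuous_projIcc).comp
      ((continuous_const.mul (hcoord 0)).div_const _)))).smul continuous_const)

theorem armSlideMap_of_apply_le (hm : m ∈ Ioo a b) {x : DFanAmbient} (h : x n ≤ a) :
    armSlideMap ε n a b m m' x = x := by
  rw [armSlideMap, tent_of_notMem_Ioo hm fun hx => h.not_gt hx.1, mul_zero, zero_mul, zero_smul,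
    add_zero]

theorem armSlideMap_fanPoint_self (H : IsArmSlide ε n a b m m') {u : ℝ} :
    armSlideMap ε n a b m m' (fanPoint ε n u) = fanPoint ε n (slide a b m m' u) := by
  by_cases hu : u ∈ Ioo a b
  · have hcut : 1 ≤ ε * fanPoint ε n u 0 / (1 - b) := by
      rw [fanPoint_apply_zero H.one_le, ← mul_assoc, mul_self_of_sign H.sign, one_mul,
        one_le_div (by linarith [H.lt_one])]
      linarith [hu.2]
    rw [armSlideMap, projIcc_of_right_le _ hcut, fanPoint_apply_self H.one_le, slide]
    simp only [fanPoint]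
    module
  · rw [slide_of_notMem_Ioo H.mem hu, armSlideMap, fanPoint_apply_self H.one_le,
      tent_of_notMem_Ioo H.mem hu, mul_zero, zero_mul, zero_smul, add_zero]

theorem armSlideMap_fanPoint_neg (H : IsArmSlide ε n a b m m') {u : ℝ} (hu : u ≤ 1) :
    armSlideMap ε n a b m m' (fanPoint (-ε) n u) = fanPoint (-ε) n u := by
  have hcut : ε * fanPoint (-ε) n u 0 / (1 - b) ≤ 0 := by
    rw [fanPoint_apply_zero H.one_le, neg_mul, mul_neg, ← mul_assoc, mul_self_of_sign H.sign]
    exact div_nonpos_of_nonpos_of_nonneg (by linarith) (by linarith [H.lt_one])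
  rw [armSlideMap, projIcc_of_le_left _ hcut]
  simp

theorem armSlideMap_fanPoint (H : IsArmSlide ε n a b m m') {ε' : ℝ} (hε' : ε' = 1 ∨ ε' = -1)
    (n' : ℕ) {u : ℝ} (hu : u ∈ Icc (0 : ℝ) 1) :
    armSlideMap ε n a b m m' (fanPoint ε' n' u) =
      if ε' = ε ∧ n' = n then fanPoint ε n (slide a b m m' u) else fanPoint ε' n' u := by
  rcases eq_or_ne n' n with rfl | hn
  · rcases sign_cases H.sign hε' with rfl | rfl
    · rw [if_pos ⟨rfl, rfl⟩, armSlideMap_fanPoint_self H]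
    · have : -ε ≠ ε := fun h => by rcases H.sign with rfl | rfl <;> norm_num at h
      rw [if_neg fun h => this h.1, armSlideMap_fanPoint_neg H hu.2]
  · rw [if_neg fun h => hn h.2, armSlideMap_of_apply_le H.mem]
    rw [fanPoint_apply_of_ne (by have := H.one_le; omega) hn.symm]
    exact H.nonneg

theorem armSlideMap_mem (H : IsArmSlide ε n a b m m') {x : DFanAmbient} (hx : x ∈ DoubleFan) :
    armSlideMap ε n a b m m' x ∈ DoubleFan := by
  obtain ⟨ε', hε', n', hn', u, hu, rfl⟩ := mem_doubleFan_iff.1 hx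
  rw [armSlideMap_fanPoint H hε' n' hu]
  split_ifs
  · exact fanPoint_mem H.sign H.one_le (slide_mem_Icc H.mem H.mem'
      (Icc_subset_Icc H.nonneg H.lt_one.le) hu)
  · exact hx

theorem armSlideMap_armSlideMap (H : IsArmSlide ε n a b m m') {x : DFanAmbient}
    (hx : x ∈ DoubleFan) : armSlideMap ε n a b m' m (armSlideMap ε n a b m m' x) = x := by
  obtain ⟨ε', hε', n', -, u, hu, rfl⟩ := mem_doubleFan_iff.1 hx
  rw [armSlideMap_fanPoint H hε' n' hu]
  split_ifs with h
  · rw [armSlideMap_fanPoint_self H.symm, slide_slide H.mem H.mem', h.1, h.2]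
  · rw [armSlideMap_fanPoint H.symm hε' n' hu, if_neg h]

def armSlide (H : IsArmSlide ε n a b m m') : DoubleFan ≃ₜ DoubleFan where
  toFun x := ⟨armSlideMap ε n a b m m' x, armSlideMap_mem H x.2⟩
  invFun x := ⟨armSlideMap ε n a b m' m x, armSlideMap_mem H.symm x.2⟩
  left_inv x := Subtype.ext (armSlideMap_armSlideMap H x.2)
  right_inv x := Subtype.ext (armSlideMap_armSlideMap H.symm x.2)
  continuous_toFun := ((continuous_armSlideMap ..).comp continuous_subtype_val).subtype_mk _
  continuous_invFun := ((continuous_armSlideMap ..).comp continuous_subtype_val).subtype_mk _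

theorem armSlide_apply_coe (H : IsArmSlide ε n a b m m') (x : DoubleFan) :
    (armSlide H x : DFanAmbient) = armSlideMap ε n a b m m' x := rfl

theorem armSlide_mem_DGroup (H : IsArmSlide ε n a b m m')
    (hmarked : ∀ k : ℕ, 1 ≤ k → (k : ℝ)⁻¹ ∉ Ioo a b) : armSlide H ∈ DGroup := by
  rintro x ⟨c, k, n', hc, hk, -, hx⟩
  have hk' : (k : ℝ)⁻¹ ∈ Icc (0 : ℝ) 1 := ⟨by positivity, Nat.cast_inv_le_one k⟩
  obtain ⟨ε', hε', hx'⟩ :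
      ∃ ε', (ε' = 1 ∨ ε' = -1) ∧ (x : DFanAmbient) = fanPoint ε' n' (k : ℝ)⁻¹ := by
    rcases hc with rfl | rfl
    · exact ⟨1, Or.inl rfl, by rw [hx, fanPoint, one_smul]⟩
    · exact ⟨-1, Or.inr rfl, by rw [hx, fanPoint, neg_one_smul]⟩
  apply Subtype.ext
  rw [armSlide_apply_coe, hx', armSlideMap_fanPoint H hε' n' hk']
  split_ifs with h
  · rw [slide_of_notMem_Ioo H.mem (hmarked k hk), h.1, h.2]
  · rfl

/-- The `j`-th arm runs from `ε e₀` to `e_{j+1}`; the parameter `t` is clamped to `[0, 1]`. -/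
def armPoint (hε : ε = 1 ∨ ε = -1) (j : ℕ) (t : ℝ) : DoubleFan :=
  ⟨fanPoint ε (j + 1) (projIcc 0 1 zero_le_one t),
    fanPoint_mem hε (Nat.le_add_left 1 j) (projIcc 0 1 zero_le_one t).2⟩

theorem armPoint_coe (hε : ε = 1 ∨ ε = -1) (j : ℕ) {t : ℝ} (ht : t ∈ Icc (0 : ℝ) 1) :
    (armPoint hε j t : DFanAmbient) = fanPoint ε (j + 1) t := by
  simp [armPoint, projIcc_of_mem _ ht]

theorem armPoint_zero_coe (hε : ε = 1 ∨ ε = -1) (j : ℕ) :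
    (armPoint hε j 0 : DFanAmbient) = ε • dBasis 0 := by
  rw [armPoint_coe hε j ⟨le_rfl, zero_le_one⟩, fanPoint_zero]

theorem armPoint_one_coe (hε : ε = 1 ∨ ε = -1) (j : ℕ) :
    (armPoint hε j 1 : DFanAmbient) = dBasis (j + 1) := by
  rw [armPoint_coe hε j ⟨zero_le_one, le_rfl⟩, fanPoint_one]

theorem continuous_armPoint (hε : ε = 1 ∨ ε = -1) (j : ℕ) : Continuous (armPoint hε j) := by
  refine Continuous.subtype_mk ?_ _
  unfold fanPoint
  fun_prop

theorem exists_DGroup_armPoint_eq (hε : ε = 1 ∨ ε = -1) (j k : ℕ) {t s : ℝ}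
    (ht : t ∈ Ioo ((k + 1 : ℝ)⁻¹) (k : ℝ)⁻¹) (hs : s ∈ Ioo ((k + 1 : ℝ)⁻¹) (k : ℝ)⁻¹) :
    ∃ g : DGroup, (g : DoubleFan ≃ₜ DoubleFan) (armPoint hε j t) = armPoint hε j s ∧
      ∀ x : DoubleFan, (x : DFanAmbient) (j + 1) ≤ (k + 1 : ℝ)⁻¹ →
        (g : DoubleFan ≃ₜ DoubleFan) x = x := by
  obtain ⟨b, hb⟩ := exists_between (max_lt ht.2 hs.2)
  have H : IsArmSlide ε (j + 1) (k + 1 : ℝ)⁻¹ b t s :=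
    ⟨hε, Nat.le_add_left 1 j, by positivity, by linarith [Nat.cast_inv_le_one (α := ℝ) k],
      ⟨ht.1, (le_max_left t s).trans_lt hb.1⟩, ⟨hs.1, (le_max_right t s).trans_lt hb.1⟩⟩
  have hmarked : ∀ k' : ℕ, 1 ≤ k' → (k' : ℝ)⁻¹ ∉ Ioo (k + 1 : ℝ)⁻¹ b := by
    intro k' hk' hmem
    rcases le_or_gt k' k with h | h
    · have : (k : ℝ)⁻¹ ≤ (k' : ℝ)⁻¹ := inv_anti₀ (by positivity) (by exact_mod_cast h)
      linarith [hmem.2]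
    · have : (k' : ℝ)⁻¹ ≤ (k + 1 : ℝ)⁻¹ := inv_anti₀ (by positivity) (by exact_mod_cast h)
      linarith [hmem.1]
  have hmem : ∀ {u : ℝ}, u ∈ Ioo ((k + 1 : ℝ)⁻¹) (k : ℝ)⁻¹ → u ∈ Icc (0 : ℝ) 1 := fun hu =>
    ⟨(inv_pos.2 (by positivity)).le.trans hu.1.le, hu.2.le.trans (Nat.cast_inv_le_one k)⟩
  refine ⟨⟨armSlide H, armSlide_mem_DGroup H hmarked⟩, Subtype.ext ?_, fun x hx => ?_⟩
  · rw [armSlide_apply_coe, armPoint_coe hε j (hmem ht), armPoint_coe hε j (hmem hs),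
      armSlideMap_fanPoint_self H, slide_self H.mem]
  · exact Subtype.ext (armSlideMap_of_apply_le H.mem hx)

section Collapse

variable {K : Type*} [UniformSpace K] [CompactSpace K] [MulAction DGroup K]
  [ContinuousSMul DGroup K] {i : DoubleFan → K}
  (heq : ∀ (g : DGroup) (x : DoubleFan), i ((g : DoubleFan ≃ₜ DoubleFan) x) = g • i x)
  (hε : ε = 1 ∨ ε = -1)
include heq

theorem tendsto_armPoint_slide_uniformity {k : ℕ} {t : ℝ}
    (ht : t ∈ Ioo ((k + 1 : ℝ)⁻¹) (k : ℝ)⁻¹) {s : ℕ → ℝ}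
    (hs : ∀ j, s j ∈ Ioo ((k + 1 : ℝ)⁻¹) (k : ℝ)⁻¹) :
    Tendsto (fun j => (i (armPoint hε j t), i (armPoint hε j (s j)))) atTop (𝓤 K) := by
  choose g hg hfix using fun j => exists_DGroup_armPoint_eq hε j k ht (hs j)
  have hg1 : Tendsto g atTop (𝓝 1) := by
    refine DGroup.tendsto_nhds_one fun C hC => ?_
    have hsmall := (hC.image continuous_subtype_val).eventually_cofinite_forall_norm_apply_lt
      (by norm_num) (inv_pos.2 (by positivity : (0 : ℝ) < k + 1))
    rw [Nat.cofinite_eq_atTop] at hsmall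
    filter_upwards [(tendsto_add_atTop_nat 1).eventually hsmall] with j hj x hx
    exact hfix j x ((le_abs_self _).trans (hj x (mem_image_of_mem _ hx)).le)
  refine (tendsto_uniformity_smul_of_tendsto_one hg1 fun j => i (armPoint hε j t)).congr
    fun j => ?_
  rw [← heq, hg]

theorem tendsto_armPoint_uniformity (hi : Continuous i) {k : ℕ} (hk : 1 ≤ k) {t r : ℝ}
    (ht : t ∈ Ioo ((k + 1 : ℝ)⁻¹) (k : ℝ)⁻¹) (hr : r ∈ Icc ((k + 1 : ℝ)⁻¹) (k : ℝ)⁻¹) :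
    Tendsto (fun j => (i (armPoint hε j t), i (armPoint hε j r))) atTop (𝓤 K) := by
  intro W hW
  obtain ⟨V, hV, hVW⟩ := comp_mem_uniformity_sets hW
  have hr' : r ∈ closure (Ioo ((k + 1 : ℝ)⁻¹) (k : ℝ)⁻¹) := by
    rwa [closure_Ioo (inv_strictAnti₀ (by positivity) (lt_add_one (k : ℝ))).ne]
  have happrox : ∀ j, ∃ s ∈ Ioo ((k + 1 : ℝ)⁻¹) (k : ℝ)⁻¹,
      (i (armPoint hε j s), i (armPoint hε j r)) ∈ V := fun j =>
    mem_closure_iff_nhds.1 hr' _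
      (((hi.comp (continuous_armPoint hε j)).tendsto r) (mem_nhds_right _ hV)) |>.imp
      fun _ h => ⟨h.2, h.1⟩
  choose s hs hsV using happrox
  rw [mem_map]
  filter_upwards [tendsto_armPoint_slide_uniformity heq hε ht hs |>.eventually_mem hV]
    with j hj
  exact hVW ⟨_, hj, hsV j⟩

theorem tendsto_armPoint_inv_uniformity (hi : Continuous i) {k : ℕ} (hk : 1 ≤ k) :
    Tendsto (fun j => (i (armPoint hε j (k : ℝ)⁻¹), i (armPoint hε j 1))) atTop (𝓤 K) := by
  induction k, hk using Nat.le_induction with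
  | base => simpa using tendsto_diag_uniformity (fun j => i (armPoint hε j 1)) atTop
  | succ k hk ih =>
    have hlt : (k + 1 : ℝ)⁻¹ < (k : ℝ)⁻¹ := inv_strictAnti₀ (by positivity) (lt_add_one (k : ℝ))
    obtain ⟨c, hc⟩ := exists_between hlt
    have hleft := tendsto_armPoint_uniformity heq hε hi hk hc ⟨le_rfl, hlt.le⟩
    have hright := tendsto_armPoint_uniformity heq hε hi hk hc ⟨hlt.le, le_rfl⟩
    push_cast
    exact (hleft.uniformity_symm.uniformity_trans hright).uniformity_trans ih

theorem tendsto_armPoint_one (hi : Continuous i) :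
    Tendsto (fun j => i (armPoint hε j 1)) atTop (𝓝 (i (armPoint hε 0 0))) := by
  rw [Uniform.tendsto_nhds_right]
  intro W hW
  obtain ⟨V, hV, hVW⟩ := comp_mem_uniformity_sets hW
  obtain ⟨δ, hδ, hball⟩ := Metric.mem_nhds_iff.1
    ((hi.tendsto (armPoint hε 0 0)) (mem_nhds_left _ hV))
  obtain ⟨k, hk⟩ := exists_nat_gt (2 / δ)
  have hk0 : (0 : ℝ) < k := (div_pos two_pos hδ).trans hk
  have hclose : ∀ j, (i (armPoint hε 0 0), i (armPoint hε j (k : ℝ)⁻¹)) ∈ V := fun j => by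
    have hk' : (k : ℝ)⁻¹ ∈ Icc (0 : ℝ) 1 := ⟨by positivity, Nat.cast_inv_le_one k⟩
    apply hball
    rw [Metric.mem_ball, Subtype.dist_eq, dist_eq_norm, armPoint_coe hε j hk', armPoint_zero_coe]
    calc ‖fanPoint ε (j + 1) (k : ℝ)⁻¹ - ε • dBasis 0‖ ≤ 2 * (k : ℝ)⁻¹ :=
          norm_fanPoint_sub_le hε _ hk'.1
      _ < δ := by
          rw [← div_eq_mul_inv, div_lt_iff₀ hk0]
          rw [div_lt_iff₀ hδ] at hk
          linarith
  rw [mem_map]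
  filter_upwards [tendsto_armPoint_inv_uniformity heq hε hi (Nat.cast_pos.1 hk0)
    |>.eventually_mem hV] with j hj
  exact hVW ⟨_, hclose j, hj⟩

theorem map_dPlus_eq_map_dMinus [T2Space K] (hi : Continuous i) : i dPlus = i dMinus := by
  have hp : (1 : ℝ) = 1 ∨ (1 : ℝ) = -1 := Or.inl rfl
  have hm : (-1 : ℝ) = 1 ∨ (-1 : ℝ) = -1 := Or.inr rfl
  have hplus : armPoint hp 0 0 = dPlus := Subtype.ext (by rw [armPoint_zero_coe, one_smul]; rfl)
  have hminus : armPoint hm 0 0 = dMinus :=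
    Subtype.ext (by rw [armPoint_zero_coe, neg_one_smul]; rfl)
  have hends : ∀ j, armPoint hm j 1 = armPoint hp j 1 := fun j =>
    Subtype.ext (by rw [armPoint_one_coe, armPoint_one_coe])
  refine hplus ▸ hminus ▸ tendsto_nhds_unique (tendsto_armPoint_one heq hp hi) ?_
  simpa only [hends] using tendsto_armPoint_one heq hm hi

end Collapse

theorem dPlus_ne_dMinus : dPlus ≠ dMinus := fun h => by
  have h0 := congrArg (fun x : DoubleFan => (x : DFanAmbient) 0) h
  simp only [dPlus, dMinus, lp.coeFn_neg, Pi.neg_apply, dBasis_apply_self] at h0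
  norm_num at h0

end DoubleFan

theorem stmt_16_general (K : Type*) [TopologicalSpace K] [CompactSpace K] [T2Space K]
    [MulAction DGroup K] [ContinuousSMul DGroup K]
    (i : ↥DoubleFan → K) (hi : Continuous i)
    (heq : ∀ (g : DGroup) (x : ↥DoubleFan),
      i ((g : ↥DoubleFan ≃ₜ ↥DoubleFan) x) = g • i x) :
    i dPlus = i dMinus ∧ ¬ Function.Injective i := by
  let : UniformSpace K := uniformSpaceOfCompactR1
  have h := DoubleFan.map_dPlus_eq_map_dMinus heq hi
  exact ⟨h, fun hinj => DoubleFan.dPlus_ne_dMinus (hinj h)⟩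

theorem stmt_16 (K : Type*) [TopologicalSpace K] [CompactSpace K] [T2Space K]
    [MulAction DGroup K] [ContinuousSMul DGroup K]
    (i : ↥DoubleFan → K) (hi : Continuous i)
    (heq : ∀ (g : DGroup) (x : ↥DoubleFan),
      i ((g : ↥DoubleFan ≃ₜ ↥DoubleFan) x) = g • i x)
    (hd : DenseRange i) :
    i dPlus = i dMinus ∧ ¬ Function.Injective i :=
  stmt_16_general K i hi heq
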